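/- If a preference order ≽ on actions satisfies (Canc), then the induced relation ≽^k on canonical maps, defined by c_α ≽^k c_β iff α ≽ β, is well-defined (independent of the choice of representatives α, β), complete, and transitive. -/

import Mathlib

noncomputable section

inductive Form (Φ : Type) : Type where
  | tru : Form Φ
  | fls : Form Φ
  | var : Φ → Form Φ
  | neg : Form Φ → Form Φ
  | and : Form Φ → Form Φ → Form Φ
  | or : Form Φ → Form Φ → Form Φ
deriving DecidableEq

namespace Form
def eval {Φ : Type} (v : Φ → Bool) : Form Φ → Bool
  | tru => true
  | fls => false
  | var p => v p
  | neg φ => !(φ.eval v)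
  | and φ ψ => φ.eval v && ψ.eval v
  | or φ ψ => φ.eval v || ψ.eval v

def Valid {Φ : Type} (φ : Form Φ) : Prop := ∀ v, φ.eval v = true
def Equiv {Φ : Type} (φ ψ : Form Φ) : Prop := ∀ v, φ.eval v = ψ.eval v
def imp {Φ : Type} (φ ψ : Form Φ) : Form Φ := .or (.neg φ) ψ
end Form

section Atoms
variable {Φ : Type} [Fintype Φ] [DecidableEq Φ]

def bigAnd {Φ : Type} (l : List (Form Φ)) : Form Φ := l.foldr .and .tru
def bigOr {Φ : Type} (l : List (Form Φ)) : Form Φ := l.foldr .or .fls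

/-- The atom `φ_a` for `a ⊆ Φ`. -/
def atomForm (a : Finset Φ) : Form Φ :=
  .and (bigAnd ((Finset.univ.filter (· ∈ a)).toList.map .var))
       (bigAnd ((Finset.univ.filter (· ∉ a)).toList.map (fun p => .neg (.var p))))

/-- `φ_A`, the disjunction of the atoms in `A`. -/
def disjForm (A : Finset (Finset Φ)) : Form Φ := bigOr (A.toList.map atomForm)

/-- The valuation corresponding to an atom. -/
def atomVal (a : Finset Φ) : Φ → Bool := fun p => p ∈ a

/-- The set of atoms whose disjunction is equivalent to `φ`. -/
def canonSet (φ : Form Φ) : Finset (Finset Φ) :=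
  Finset.univ.filter (fun a => φ.eval (atomVal a) = true)

end Atoms

inductive Act (Φ : Type) : Type where
  | noop : Act Φ
  | doa : Form Φ → Act Φ
  | ite : Form Φ → Act Φ → Act Φ → Act Φ
  | seq : Act Φ → Act Φ → Act Φ
deriving DecidableEq

/-- `HasDepth α k`: α is a depth-`k` action. -/
inductive HasDepth {Φ : Type} : Act Φ → ℕ → Prop where
  | noop : HasDepth .noop 0
  | up {α k} : HasDepth α k → HasDepth α (k+1)
  | prim {φ} : HasDepth (.doa φ) 1
  | cond {ψ α β k} : HasDepth α (k+1) → HasDepth β (k+1) → HasDepth (.ite ψ α β) (k+1)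
  | seq {α β k₁ k₂ m} : HasDepth α k₁ → HasDepth β k₂ → k₁ + k₂ ≤ m → 2 ≤ m →
      HasDepth (.seq α β) m

section Canonical
variable {Φ : Type} [Fintype Φ] [DecidableEq Φ]

/-- A fixed enumeration `a₁, …, a_N` of the atoms. -/
def atomList (Φ : Type) [Fintype Φ] [DecidableEq Φ] : List (Finset Φ) :=
  (Finset.univ : Finset (Finset Φ)).toList

/-- The nested conditional `if φ_{a₁} then c(a₁) else (… else c(a_N))`,
with trailing `noop`s trimmed. -/
def nestIf (c : Finset Φ → Act Φ) : List (Finset Φ) → Act Φ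
  | [] => .noop
  | a :: rest =>
    let r := nestIf c rest
    if c a = .noop ∧ r = .noop then .noop else .ite (atomForm a) (c a) r

/-- The canonical action determined by a canonical map `c`. -/
def gammaOf (c : Finset Φ → Act Φ) : Act Φ := nestIf c (atomList Φ)

def fuelOf {Φ : Type} : Act Φ → ℕ
  | .noop => 1
  | .doa _ => 1
  | .ite _ α β => max (fuelOf α) (fuelOf β)
  | .seq α β => fuelOf α + fuelOf β

/-- Fueled canonical map. -/
def cmapF : ℕ → Act Φ → Finset Φ → Act Φ
  | _, .noop, _ => .noop
  | _, .doa φ, _ => .doa (disjForm (canonSet φ))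
  | n, .ite ψ α β, a => if ψ.eval (atomVal a) = true then cmapF n α a else cmapF n β a
  | 0, .seq _ _, _ => .noop
  | (n+1), .seq α β, a =>
    match cmapF (n+1) α a with
    | .noop => cmapF (n+1) β a
    | .doa ψ => .seq (.doa ψ) (gammaOf (fun b => cmapF n β b))
    | .seq (.doa ψ) γ => .seq (.doa ψ) (gammaOf (fun b => cmapF n (.seq γ β) b))
    | _ => .noop
  termination_by n α _ => (n, sizeOf α)

/-- The canonical map `c_α`. -/
def cmap (α : Act Φ) : Finset Φ → Act Φ := cmapF (fuelOf α) α

/-- The canonical action `γ_α`. -/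
def gammaAct (α : Act Φ) : Act Φ := gammaOf (cmap α)

/-- `F̃ = {φ_A : ∃ φ ∈ F, ⊨ φ_A ↔ φ}`. -/
def FTilde (F : Finset (Form Φ)) : Set (Form Φ) :=
  {ψ | ∃ A : Finset (Finset Φ), ψ = disjForm A ∧ ∃ φ ∈ F, Form.Equiv (disjForm A) φ}

/-- `CA^{k,-}`: depth-`k` actions of the form `noop`, `do(φ_A)`, or `do(φ_A);γ_β`. -/
def CAminus (F : Finset (Form Φ)) (k : ℕ) : Set (Act Φ) :=
  {α | HasDepth α k ∧
    (α = .noop ∨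
     (∃ A : Finset (Finset Φ), α = .doa (disjForm A) ∧ disjForm A ∈ FTilde F) ∨
     (∃ (A : Finset (Finset Φ)) (β : Act Φ),
        α = .seq (.doa (disjForm A)) (gammaAct β) ∧ disjForm A ∈ FTilde F ∧
        HasDepth β (k-1)))}

end Canonical


/-- The cancellation axiom (Canc). -/
def Canc {Φ : Type} [Fintype Φ] [DecidableEq Φ] (R : Act Φ → Act Φ → Prop) : Prop :=
  ∀ (n : ℕ) (αs βs : Fin (n+1) → Act Φ),
    (∀ a : Finset Φ,
      (Finset.univ : Finset (Fin (n+1))).val.map (fun i => cmap (αs i) a) =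
      (Finset.univ : Finset (Fin (n+1))).val.map (fun i => cmap (βs i) a)) →
    (∀ i : Fin (n+1), (i : ℕ) < n → R (αs i) (βs i)) →
    R (βs (Fin.last n)) (αs (Fin.last n))

/-- The induced relation `≽^k` on canonical maps: `f ≽^k g` iff some depth-`k`
representatives with these canonical maps are related by `≽`. -/
def IndRel {Φ : Type} [Fintype Φ] [DecidableEq Φ] (R : Act Φ → Act Φ → Prop) (k : ℕ)
    (f g : Finset Φ → Act Φ) : Prop :=
  ∃ α β : Act Φ, HasDepth α k ∧ HasDepth β k ∧ cmap α = f ∧ cmap β = g ∧ R α β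

section InducedRelation

variable {Φ : Type} [Fintype Φ] [DecidableEq Φ] {R : Act Φ → Act Φ → Prop}

/-- The instance `n = 0` of (Canc) has no premise on `R`. -/
theorem Canc.rel_of_cmap_eq (hcanc : Canc R) {α β : Act Φ} (h : cmap α = cmap β) : R α β := by
  simpa using hcanc 0 (fun _ => β) (fun _ => α) (fun a => by simp [h]) (fun i hi => by omega)

theorem Canc.rel_of_rel_of_cmap_eq (hcanc : Canc R)
    (htrans : ∀ α β γ : Act Φ, R α β → R β γ → R α γ) {α α' β β' : Act Φ}
    (hα : cmap α = cmap α') (hβ : cmap β = cmap β') (h : R α β) : R α' β' :=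
  htrans _ _ _ (hcanc.rel_of_cmap_eq hα.symm) (htrans _ _ _ h (hcanc.rel_of_cmap_eq hβ))

theorem Canc.rel_iff_of_cmap_eq (hcanc : Canc R)
    (htrans : ∀ α β γ : Act Φ, R α β → R β γ → R α γ) {α α' β β' : Act Φ}
    (hα : cmap α = cmap α') (hβ : cmap β = cmap β') : R α β ↔ R α' β' :=
  ⟨hcanc.rel_of_rel_of_cmap_eq htrans hα hβ, hcanc.rel_of_rel_of_cmap_eq htrans hα.symm hβ.symm⟩

theorem IndRel.total (hcomp : ∀ α β : Act Φ, R α β ∨ R β α) {k : ℕ} {α β : Act Φ}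
    (hα : HasDepth α k) (hβ : HasDepth β k) :
    IndRel R k (cmap α) (cmap β) ∨ IndRel R k (cmap β) (cmap α) :=
  (hcomp α β).imp (fun h => ⟨α, β, hα, hβ, rfl, rfl, h⟩) (fun h => ⟨β, α, hβ, hα, rfl, rfl, h⟩)

theorem IndRel.trans (hcanc : Canc R) (htrans : ∀ α β γ : Act Φ, R α β → R β γ → R α γ)
    {k : ℕ} {f g h : Finset Φ → Act Φ} :
    IndRel R k f g → IndRel R k g h → IndRel R k f h := by
  rintro ⟨α, β, hα, -, rfl, rfl, hαβ⟩ ⟨β', γ, -, hγ, hβ', rfl, hβγ⟩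
  have hαβ' : R α β' := hcanc.rel_of_rel_of_cmap_eq htrans rfl hβ'.symm hαβ
  exact ⟨α, γ, hα, hγ, rfl, rfl, htrans _ _ _ hαβ' hβγ⟩

end InducedRelation

/-- Under (Canc), `≽^k` is well-defined (independent of representatives),
complete, and transitive on the set `CM^k` of canonical maps of depth-`k`
actions. -/
theorem induced_relation_welldefined {Φ : Type} [Fintype Φ] [DecidableEq Φ]
    (R : Act Φ → Act Φ → Prop)
    (hcomp : ∀ α β : Act Φ, R α β ∨ R β α)
    (htrans : ∀ α β γ : Act Φ, R α β → R β γ → R α γ)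
    (hcanc : Canc R) (k : ℕ) :
    (∀ α α' β β' : Act Φ, cmap α = cmap α' → cmap β = cmap β' → (R α β ↔ R α' β')) ∧
    (∀ f g : Finset Φ → Act Φ,
       (∃ α, HasDepth α k ∧ cmap α = f) → (∃ β, HasDepth β k ∧ cmap β = g) →
       IndRel R k f g ∨ IndRel R k g f) ∧
    (∀ f g h : Finset Φ → Act Φ,
       (∃ α, HasDepth α k ∧ cmap α = f) → (∃ β, HasDepth β k ∧ cmap β = g) →
       (∃ γ, HasDepth γ k ∧ cmap γ = h) →
       IndRel R k f g → IndRel R k g h → IndRel R k f h) := by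
  refine ⟨fun α α' β β' => hcanc.rel_iff_of_cmap_eq htrans, ?_, ?_⟩
  · rintro f g ⟨α, hα, rfl⟩ ⟨β, hβ, rfl⟩
    exact IndRel.total hcomp hα hβ
  · intro f g h _ _ _
    exact IndRel.trans hcanc htrans

end
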